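/- arXiv:1902.01461 — 2 statements merged into one kernel-verified Lean document; each statement's English description precedes it below -/
import Mathlib

section
/- Let T be a finite type, let k be a positive natural number, let F be a downward-closed k-extendible system of finsets of T, and let f be the unweighted rank function of F. Then for every decision tree 𝒯 over T, adap(𝒯, f) ≤ 2k · alg(𝒯, f). (Theorem 4.1: the adaptivity gap for an unweighted rank function of a k-extendible system is at most 2k.) -/
open Finset

/-- A decision tree over a finite type `T`: either a leaf, or a node with a
probability mass function `μ : T → ℝ` and a child tree for each type `t : T`. -/
inductive DTree (T : Type*) where
  | leaf : DTree T
  | node : (T → ℝ) → (T → DTree T) → DTree T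

/-- All distributions appearing in the tree are probability mass functions. -/
def DTree.valid {T : Type*} [Fintype T] : DTree T → Prop
  | .leaf => True
  | .node μ c => (∀ t, 0 ≤ μ t) ∧ (∑ t, μ t) = 1 ∧ ∀ t, (c t).valid

/-- Contraction `f_S(A) = f(S ∪ A) − f(S)`. -/
def contract {T : Type*} [DecidableEq T] (f : Finset T → ℝ) (S : Finset T) :
    Finset T → ℝ :=
  fun A => f (S ∪ A) - f S

/-- Adaptive value: `adap(leaf, f) = 0`,
`adap(node μ c, f) = E_{I∼μ}[ f({I}) + adap(c(I), f_{{I}}) ]`. -/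
noncomputable def adap {T : Type*} [Fintype T] [DecidableEq T] :
    DTree T → (Finset T → ℝ) → ℝ
  | .leaf, _ => 0
  | .node μ c, f => ∑ t, μ t * (f {t} + adap (c t) (contract f {t}))

/-- Random-walk non-adaptive value: `alg(leaf, f) = 0`,
`alg(node μ c, f) = E_{I∼μ} E_{R∼μ}[ f({R}) + alg(c(I), f_{{R}}) ]`. -/
noncomputable def alg {T : Type*} [Fintype T] [DecidableEq T] :
    DTree T → (Finset T → ℝ) → ℝ
  | .leaf, _ => 0
  | .node μ c, f => ∑ i, ∑ r, μ i * μ r * (f {r} + alg (c i) (contract f {r}))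

/-- Downward-closed family of finsets: contains `∅` and all subsets of members. -/
def DownwardClosed {T : Type*} (F : Finset (Finset T)) : Prop :=
  ∅ ∈ F ∧ ∀ B ∈ F, ∀ A ⊆ B, A ∈ F

/-- `k`-extendible system: for every `A ⊆ B ∈ F` and element `e` with
`A ∪ {e} ∈ F`, some `Z ⊆ B \ A` with `|Z| ≤ k` has `(B \ Z) ∪ {e} ∈ F`. -/
def KExtendible {T : Type*} [DecidableEq T] (k : ℕ) (F : Finset (Finset T)) : Prop :=
  ∀ A B : Finset T, A ⊆ B → B ∈ F → ∀ e : T, A ∪ {e} ∈ F →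
    ∃ Z ⊆ B \ A, Z.card ≤ k ∧ (B \ Z) ∪ {e} ∈ F

/-- Unweighted rank function `f(A) = max_{B ∈ F} |A ∩ B|` (as a real number). -/
noncomputable def urank {T : Type*} [DecidableEq T] (F : Finset (Finset T))
    (A : Finset T) : ℝ :=
  ((F.sup fun B => (A ∩ B).card : ℕ) : ℝ)

/-- Weighted rank function `f(A) = max_{B ∈ F} Σ_{t ∈ A ∩ B} w(t)`
(for a nonempty family; any downward-closed family is nonempty). -/
noncomputable def wrank {T : Type*} [DecidableEq T] (F : Finset (Finset T))
    (w : T → ℝ) (A : Finset T) : ℝ :=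
  if h : F.Nonempty then F.sup' h (fun B => ∑ t ∈ A ∩ B, w t) else 0

open Classical in
/-- Unweighted class rank function
`f_j(A) = max_{B ∈ F} |{t ∈ A ∩ B : 2^{j−1} < w(t) ≤ 2^j}|` (as a real number). -/
noncomputable def classRank {T : Type*} [DecidableEq T] (F : Finset (Finset T))
    (w : T → ℝ) (j : ℤ) (A : Finset T) : ℝ :=
  ((F.sup fun B =>
      ((A ∩ B).filter fun t => (2:ℝ)^(j-1) < w t ∧ w t ≤ (2:ℝ)^j).card : ℕ) : ℝ)

/-!
Run the adaptive strategy (item `I`) and the random walk (item `R`, drawn independently at each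
node) side by side, and grow greedily an independent set `W ∈ F`: at each node first try to add
`R`, then `I`. Let `V ⊆ W` be the elements that came from the `R`'s. By induction on the tree,
with `A` the adaptively and `B` the non-adaptively probed items,
`f(A) + adap(𝒯, f_A) ≤ k|W| - 2k|V| + 2k (f(B) + alg(𝒯, f_B))`.
At a leaf no element of `A` can be added to `W`, so `k`-extendibility gives `f(A) ≤ k|W|`, and
`V ∈ F`, `V ⊆ B` gives `|V| ≤ f(B)`. At a node the gain of `I` after `R` is at most the gain
of `I` alone, which has the same law as the gain of `R`: the expected change of
`k|W| - 2k|V|` is at most `0`.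
-/

section RankFunction

variable {T : Type*} [DecidableEq T] {k : ℕ} {F : Finset (Finset T)}

theorem contract_contract (f : Finset T → ℝ) (S S' : Finset T) :
    contract (contract f S) S' = contract f (S ∪ S') := by
  funext X
  simp only [contract, union_assoc]
  ring

theorem contract_empty {f : Finset T → ℝ} (hf : f ∅ = 0) : contract f ∅ = f := by
  funext A
  simp [contract, hf]

theorem urank_empty (F : Finset (Finset T)) : urank F ∅ = 0 := by
  simp [urank]

theorem card_le_urank {V B M : Finset T} (hM : M ∈ F) (hVM : V ⊆ M) (hVB : V ⊆ B) :
    #V ≤ urank F B := by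
  unfold urank
  exact_mod_cast (card_le_card (subset_inter hVB hVM)).trans
    (le_sup (f := fun M => #(B ∩ M)) hM)

-- Insert the elements of `W \ M` into `M` one at a time; each insertion evicts at most `k`
-- elements of `M \ W`.
theorem card_sdiff_le_mul_card_sdiff (hdc : DownwardClosed F) (hext : KExtendible k F)
    {W M : Finset T} (hW : W ∈ F) (hM : M ∈ F) (hsat : ∀ x ∈ M, insert x W ∈ F → x ∈ W) :
    #(M \ W) ≤ k * #(W \ M) := by
  induction hn : #(W \ M) generalizing M with
  | zero =>
    have hWM : W ⊆ M := sdiff_eq_empty_iff_subset.mp (card_eq_zero.mp hn)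
    have hMW : M ⊆ W := fun x hx => hsat x hx (hdc.2 M hM _ (insert_subset hx hWM))
    simp [sdiff_eq_empty_iff_subset.mpr hMW]
  | succ n ih =>
    obtain ⟨w, hw⟩ : (W \ M).Nonempty := card_pos.mp (by omega)
    obtain ⟨hwW, hwM⟩ := mem_sdiff.mp hw
    obtain ⟨Z, hZ, hZk, hM'⟩ := hext (W ∩ M) M inter_subset_right hM w
      (hdc.2 W hW _ (union_subset inter_subset_left (singleton_subset_iff.2 hwW)))
    rw [sdiff_inter_self_right] at hZ
    have hWM' : W \ ((M \ Z) ∪ {w}) = (W \ M).erase w := by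
      ext x
      have := @hZ x
      simp only [mem_sdiff, mem_union, mem_singleton, mem_erase] at this ⊢
      tauto
    have hMW' : ((M \ Z) ∪ {w}) \ W = (M \ W) \ Z := by
      ext x
      simp only [mem_sdiff, mem_union, mem_singleton]
      constructor
      · rintro ⟨⟨hxM, hxZ⟩ | rfl, hxW⟩ <;> tauto
      · tauto
    have hsat' : ∀ x ∈ (M \ Z) ∪ {w}, insert x W ∈ F → x ∈ W := by
      intro x hx
      rcases mem_union.mp hx with hx | hx
      · exact hsat x (mem_sdiff.mp hx).1
      · rw [mem_singleton.mp hx]; exact fun _ => hwW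
    have key := ih hM' hsat' (by rw [hWM', card_erase_of_mem hw, hn]; rfl)
    rw [hMW'] at key
    calc #(M \ W) ≤ #((M \ W) \ Z) + #Z := card_le_card_sdiff_add_card
      _ ≤ k * n + k := by omega
      _ = k * (n + 1) := by ring

theorem card_le_mul_card (hk : 0 < k) (hdc : DownwardClosed F) (hext : KExtendible k F)
    {W M : Finset T} (hW : W ∈ F) (hM : M ∈ F) (hsat : ∀ x ∈ M, insert x W ∈ F → x ∈ W) :
    #M ≤ k * #W := by
  have hsdiff := card_sdiff_le_mul_card_sdiff hdc hext hW hM hsat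
  have hMW : #(M ∩ W) ≤ k * #(W ∩ M) := by
    rw [inter_comm]; exact Nat.le_mul_of_pos_left _ hk
  rw [← card_inter_add_card_sdiff M W, ← card_inter_add_card_sdiff W M]
  lia

theorem urank_le_mul_card (hk : 0 < k) (hdc : DownwardClosed F) (hext : KExtendible k F)
    {W A : Finset T} (hW : W ∈ F) (hsat : ∀ x ∈ A, insert x W ∈ F → x ∈ W) :
    urank F A ≤ k * #W := by
  unfold urank
  exact_mod_cast Finset.sup_le fun M hM => card_le_mul_card hk hdc hext hW
    (hdc.2 M hM _ inter_subset_right) fun x hx => hsat x (mem_inter.mp hx).1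

end RankFunction

section Greedy

variable {T : Type*} [DecidableEq T] {F : Finset (Finset T)} {W W' : Finset T} {x : T}

def greedyInsert (F : Finset (Finset T)) (W : Finset T) (x : T) : Finset T :=
  if insert x W ∈ F then insert x W else W

theorem subset_greedyInsert : W ⊆ greedyInsert F W x := by
  unfold greedyInsert; split_ifs
  exacts [subset_insert x W, Subset.rfl]

theorem greedyInsert_mem (hW : W ∈ F) : greedyInsert F W x ∈ F := by
  unfold greedyInsert; split_ifs with h
  exacts [h, hW]

theorem mem_greedyInsert_of_insert_mem (h : insert x (greedyInsert F W x) ∈ F) :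
    x ∈ greedyInsert F W x := by
  unfold greedyInsert at *; split_ifs at * with hx
  · exact mem_insert_self x W
  · exact absurd h hx

theorem greedyInsert_sdiff_subset : greedyInsert F W x \ W ⊆ {x} := by
  unfold greedyInsert; split_ifs
  · intro y hy
    simp only [mem_sdiff, mem_insert] at hy
    exact mem_singleton.2 (hy.1.resolve_right hy.2)
  · simp

theorem greedyInsert_sdiff_subset_greedyInsert_sdiff (hdc : DownwardClosed F) (hWW' : W ⊆ W') :
    greedyInsert F W' x \ W' ⊆ greedyInsert F W x \ W := by
  unfold greedyInsert
  by_cases h' : insert x W' ∈ F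
  · rw [if_pos h', if_pos (hdc.2 _ h' _ (insert_subset_insert x hWW'))]
    intro y hy
    simp only [mem_sdiff, mem_insert] at hy ⊢
    exact ⟨Or.inl (hy.1.resolve_right hy.2), fun hyW => hy.2 (hWW' hyW)⟩
  · simp [if_neg h']

theorem potential_greedyInsert_greedyInsert_le (hdc : DownwardClosed F) (k : ℕ) {V : Finset T}
    (hVW : V ⊆ W) (r i : T) :
    (k : ℝ) * #(greedyInsert F (greedyInsert F W r) i)
        - 2 * k * #(V ∪ (greedyInsert F W r \ W))
      ≤ k * #W - 2 * k * #V
        + k * ((#(greedyInsert F W i \ W) : ℝ) - #(greedyInsert F W r \ W)) := by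
  set Wr := greedyInsert F W r
  have hWr : #Wr = #(Wr \ W) + #W := (card_sdiff_add_card_eq_card subset_greedyInsert).symm
  have hWri : #(greedyInsert F Wr i) = #(greedyInsert F Wr i \ Wr) + #Wr :=
    (card_sdiff_add_card_eq_card subset_greedyInsert).symm
  have hV : #(V ∪ (Wr \ W)) = #V + #(Wr \ W) :=
    card_union_of_disjoint (disjoint_sdiff.mono_left hVW)
  have hgain : (#(greedyInsert F Wr i \ Wr) : ℝ) ≤ #(greedyInsert F W i \ W) := by
    exact_mod_cast card_le_card
      (greedyInsert_sdiff_subset_greedyInsert_sdiff hdc subset_greedyInsert)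
  rw [hWri, hWr, hV]
  push_cast
  nlinarith [mul_le_mul_of_nonneg_left hgain k.cast_nonneg]

end Greedy

section Expectation

variable {T : Type*} [Fintype T] {μ : T → ℝ}

theorem sum_sum_mul_left (hμ1 : ∑ t, μ t = 1) (g : T → ℝ) :
    ∑ i, ∑ r, μ i * μ r * g i = ∑ i, μ i * g i := by
  simp_rw [mul_right_comm (μ _) (μ _) (g _), ← mul_sum, hμ1, mul_one]

-- `d I - d R` has mean zero when `I` and `R` are independent with the same law.
theorem sum_mul_le_of_le_add_sub_add (hμ0 : ∀ t, 0 ≤ μ t) (hμ1 : ∑ t, μ t = 1)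
    {X d : T → ℝ} {C a : ℝ} {Y : T → T → ℝ} (h : ∀ i r, X i ≤ C + (d i - d r) + a * Y i r) :
    ∑ i, μ i * X i ≤ C + a * ∑ i, ∑ r, μ i * μ r * Y i r := by
  have hswap : ∑ i, ∑ r, μ i * μ r * d r = ∑ i, ∑ r, μ i * μ r * d i := by
    rw [sum_comm]
    exact sum_congr rfl fun r _ => sum_congr rfl fun i _ => by ring
  calc ∑ i, μ i * X i = ∑ i, ∑ r, μ i * μ r * X i := (sum_sum_mul_left hμ1 X).symm
    _ ≤ ∑ i, ∑ r, μ i * μ r * (C + (d i - d r) + a * Y i r) := by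
      gcongr with i _ r _
      · exact mul_nonneg (hμ0 i) (hμ0 r)
      · exact h i r
    _ = C + a * ∑ i, ∑ r, μ i * μ r * Y i r := by
      simp only [mul_add, mul_sub, sum_add_distrib, sum_sub_distrib, hswap, sub_self, add_zero,
        mul_sum, mul_left_comm _ a]
      rw [sum_sum_mul_left hμ1 (fun _ => C), ← sum_mul, hμ1, one_mul]

variable [DecidableEq T]

theorem add_adap_node_contract (hμ1 : ∑ t, μ t = 1) (c : T → DTree T) (f : Finset T → ℝ)
    (A : Finset T) :
    f A + adap (.node μ c) (contract f A)
      = ∑ t, μ t * (f (A ∪ {t}) + adap (c t) (contract f (A ∪ {t}))) := by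
  simp only [adap, contract_contract, contract, mul_add, mul_sub, sum_add_distrib,
    sum_sub_distrib, ← sum_mul, hμ1]
  ring

theorem add_alg_node_contract (hμ1 : ∑ t, μ t = 1) (c : T → DTree T) (f : Finset T → ℝ)
    (B : Finset T) :
    f B + alg (.node μ c) (contract f B)
      = ∑ i, ∑ r, μ i * μ r * (f (B ∪ {r}) + alg (c i) (contract f (B ∪ {r}))) := by
  simp only [alg, contract_contract, contract, mul_add, mul_sub, sum_add_distrib,
    sum_sub_distrib, ← sum_mul, ← mul_sum, hμ1, mul_one]
  ring

end Expectation

theorem urank_add_adap_le {T : Type*} [Fintype T] [DecidableEq T] {k : ℕ}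
    {F : Finset (Finset T)} (hk : 0 < k) (hdc : DownwardClosed F) (hext : KExtendible k F)
    {𝒯 : DTree T} (h𝒯 : 𝒯.valid) {A B W V : Finset T} (hW : W ∈ F) (hVW : V ⊆ W)
    (hVB : V ⊆ B) (hsat : ∀ x ∈ A, insert x W ∈ F → x ∈ W) :
    urank F A + adap 𝒯 (contract (urank F) A)
      ≤ k * #W - 2 * k * #V + 2 * k * (urank F B + alg 𝒯 (contract (urank F) B)) := by
  induction 𝒯 generalizing A B W V with
  | leaf =>
    have hA := urank_le_mul_card hk hdc hext hW hsat
    have hB := card_le_urank hW hVW hVB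
    simp only [adap, alg, add_zero]
    nlinarith [mul_le_mul_of_nonneg_left hB (by positivity : (0 : ℝ) ≤ 2 * k)]
  | node μ c ih =>
    obtain ⟨hμ0, hμ1, hc⟩ := h𝒯
    rw [add_adap_node_contract hμ1, add_alg_node_contract hμ1]
    refine sum_mul_le_of_le_add_sub_add hμ0 hμ1
      (d := fun x => k * #(greedyInsert F W x \ W)) fun i r => ?_
    set Wr := greedyInsert F W r
    have hsat' : ∀ x ∈ A ∪ {i}, insert x (greedyInsert F Wr i) ∈ F →
        x ∈ greedyInsert F Wr i := by
      intro x hx hins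
      rcases mem_union.mp hx with hx | hx
      · have hWW' : W ⊆ greedyInsert F Wr i := subset_greedyInsert.trans subset_greedyInsert
        exact hWW' (hsat x hx (hdc.2 _ hins _ (insert_subset_insert x hWW')))
      · rw [mem_singleton.mp hx] at hins ⊢
        exact mem_greedyInsert_of_insert_mem hins
    have hV' : V ∪ (Wr \ W) ⊆ greedyInsert F Wr i :=
      union_subset (hVW.trans subset_greedyInsert) sdiff_subset |>.trans subset_greedyInsert
    have hVB' : V ∪ (Wr \ W) ⊆ B ∪ {r} := union_subset_union hVB greedyInsert_sdiff_subset
    have hind := ih i (hc i) (greedyInsert_mem (greedyInsert_mem hW)) hV' hVB' hsat'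
    have hstep := potential_greedyInsert_greedyInsert_le hdc k hVW r i
    linarith

/-- Theorem 4.1: for the unweighted rank function of a downward-closed
`k`-extendible system, `adap(𝒯, f) ≤ 2k · alg(𝒯, f)`. -/
theorem kExtendible_unweighted_adaptivity_gap_le
    {T : Type*} [Fintype T] [DecidableEq T]
    (k : ℕ) (hk : 0 < k) (F : Finset (Finset T))
    (hdc : DownwardClosed F) (hext : KExtendible k F)
    (𝒯 : DTree T) (h𝒯 : 𝒯.valid) :
    adap 𝒯 (urank F) ≤ (2 * k : ℝ) * alg 𝒯 (urank F) := by
  have h := urank_add_adap_le hk hdc hext h𝒯 (A := ∅) (B := ∅) hdc.1 Subset.rfl Subset.rfl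
    (by simp)
  simpa [contract_empty (urank_empty F), urank_empty] using h
end

section
/- For every δ > 0 there exists a real ε with 0 < ε < 1/2 such that the following holds. Let D be the least natural number with (1−ε)^D < ε². Let a : ℕ → ℝ satisfy a(m) = 0 for m > D and a(k) = Σ_{i=0}^{D−k} (1−ε)^i·ε·((1−ε)^k + a(k+i+1)) for k ≤ D, and let g : ℕ → ℝ satisfy g(m) = 0 for m > D, g(D) = ε·(1−ε)^D, and g(k) = max_{0 ≤ i ≤ D−k} [ (1−ε)^k·(1−(1−ε)^{i+1}) + g(k+i+1) ] for k < D. Then a(0) > 2 − δ and g(0) < 1; in particular a(0) > (2 − δ)·g(0). (Lower bound in Theorem 3.1: the adaptivity gap for monotone submodular stochastic probing is at least 2.) -/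
/-!
Peeling off the first summand of the recursion for `a` gives
`a k = a (k+1) + ε(1-ε)^k + ε(1-ε)^(k+1) - ε(1-ε)^(D+1)`, hence the closed form
`a 0 = 2 - ε - (2 + εD)(1-ε)^(D+1)`. Since `(1-ε)^D < ε²`, Bernoulli's inequality applied to
half of `D` gives `εD(1-ε)^D ≤ 3ε`, so `a 0 > 2 - 5ε`. On the other side every candidate in the
maximum defining `g k` is below `(1-ε)^k - (1-ε)^(k+i+1) + (1-ε)^(k+i+1)`, so `g 0 < 1`.
Taking `ε ≤ δ/8` finishes the proof.
-/

open Finset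

lemma one_add_mul_mul_one_sub_pow_le_one {ε : ℝ} (hε0 : 0 ≤ ε) (hε1 : ε ≤ 1) (n : ℕ) :
    (1 + n * ε) * (1 - ε) ^ n ≤ 1 :=
  calc (1 + n * ε) * (1 - ε) ^ n ≤ (1 + ε) ^ n * (1 - ε) ^ n := by
        gcongr
        exact one_add_mul_le_pow (by linarith) n
    _ = (1 - ε ^ 2) ^ n := by rw [← mul_pow]; ring
    _ ≤ 1 := pow_le_one₀ (by nlinarith) (by nlinarith)

lemma mul_mul_one_sub_pow_le_three_mul {ε : ℝ} (hε0 : 0 ≤ ε) (hε1 : ε ≤ 1) {D : ℕ} (hD : 2 ≤ D)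
    (hqD : (1 - ε) ^ D < ε ^ 2) : ε * D * (1 - ε) ^ D ≤ 3 * ε := by
  set h := D / 2
  have hq0 : 0 ≤ 1 - ε := by linarith
  have hhalf : (1 - ε) ^ (D - h) < ε := by
    refine lt_of_pow_lt_pow_left₀ 2 hε0 (lt_of_le_of_lt ?_ hqD)
    rw [← pow_mul]
    exact pow_le_pow_of_le_one hq0 (by linarith) (by omega)
  have hbern : ε * h * (1 - ε) ^ h ≤ 1 := by
    nlinarith [one_add_mul_mul_one_sub_pow_le_one hε0 hε1 h, pow_nonneg hq0 h]
  have hD3 : (D : ℝ) ≤ 3 * h := by exact_mod_cast (by omega : D ≤ 3 * h)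
  calc ε * D * (1 - ε) ^ D = ε * D * (1 - ε) ^ h * (1 - ε) ^ (D - h) := by
        rw [mul_assoc _ ((1 - ε) ^ h), ← pow_add, Nat.add_sub_cancel' (by omega)]
    _ ≤ ε * (3 * h) * (1 - ε) ^ h * ε := by gcongr
    _ = 3 * ε * (ε * h * (1 - ε) ^ h) := by ring
    _ ≤ 3 * ε := by nlinarith

section AdaptiveValue

variable {ε : ℝ} {D : ℕ} {a : ℕ → ℝ}

lemma adaptive_value_eq_succ
    (ha : ∀ k ≤ D, a k = ∑ i ∈ range (D - k + 1),
        (1 - ε) ^ i * ε * ((1 - ε) ^ k + a (k + i + 1)))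
    {k : ℕ} (hk : k < D) :
    a k = a (k + 1) + ε * (1 - ε) ^ k + ε * (1 - ε) ^ (k + 1) - ε * (1 - ε) ^ (D + 1) := by
  obtain ⟨n, rfl⟩ : ∃ n, D = k + 1 + n := ⟨D - (k + 1), by omega⟩
  have hk0 := ha k hk.le
  have hk1 := ha (k + 1) (by omega)
  rw [show k + 1 + n - k + 1 = n + 1 + 1 by omega, sum_range_succ'] at hk0
  rw [show k + 1 + n - (k + 1) + 1 = n + 1 by omega] at hk1
  have htail : ∑ i ∈ range (n + 1), (1 - ε) ^ (i + 1) * ε * ((1 - ε) ^ k + a (k + (i + 1) + 1))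
      = (1 - ε) * a (k + 1) + ε ^ 2 * (1 - ε) ^ (k + 1) * ∑ i ∈ range (n + 1), (1 - ε) ^ i := by
    rw [hk1, mul_sum, mul_sum, ← sum_add_distrib]
    refine sum_congr rfl fun i _ => ?_
    rw [show k + (i + 1) + 1 = k + 1 + i + 1 by omega]
    ring
  linear_combination hk0 + htail + ε * (1 - ε) ^ (k + 1) * mul_neg_geom_sum (1 - ε) (n + 1)

lemma adaptive_value_eq (ha0 : ∀ m, D < m → a m = 0)
    (ha : ∀ k ≤ D, a k = ∑ i ∈ range (D - k + 1),
        (1 - ε) ^ i * ε * ((1 - ε) ^ k + a (k + i + 1)))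
    {k : ℕ} (hk : k ≤ D) :
    a k = (2 - ε) * (1 - ε) ^ k - (2 + ε * ((D : ℝ) - k)) * (1 - ε) ^ (D + 1) := by
  induction hk using Nat.decreasingInduction with
  | self =>
    rw [ha D le_rfl, Nat.sub_self, sum_range_one, ha0 _ (by omega)]
    ring
  | of_succ k hk ih =>
    rw [adaptive_value_eq_succ ha hk, ih]
    push_cast
    ring

end AdaptiveValue

lemma nonadaptive_value_bounds {ε : ℝ} (hε0 : 0 ≤ ε) (hε1 : ε < 1) {D : ℕ} {g : ℕ → ℝ}
    (hg0 : ∀ m, D < m → g m = 0) (hgD : g D = ε * (1 - ε) ^ D)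
    (hg : ∀ k < D, g k = (range (D - k + 1)).sup' nonempty_range_add_one
        (fun i => (1 - ε) ^ k * (1 - (1 - ε) ^ (i + 1)) + g (k + i + 1)))
    (k : ℕ) : 0 ≤ g k ∧ g k < (1 - ε) ^ k := by
  have hq0 : 0 < 1 - ε := by linarith
  rcases lt_trichotomy k D with hk | rfl | hk
  · have hnext : ∀ i, 0 ≤ g (k + i + 1) ∧ g (k + i + 1) < (1 - ε) ^ (k + i + 1) := fun i =>
      nonadaptive_value_bounds hε0 hε1 hg0 hgD hg (k + i + 1)
    rw [hg k hk]
    constructor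
    · refine le_trans ?_ (le_sup' _ (mem_range.mpr (Nat.succ_pos _)))
      simp only [add_zero, zero_add, pow_one]
      nlinarith [pow_pos hq0 k, (hnext 0).1]
    · refine (sup'_lt_iff _).mpr fun i _ => ?_
      have hsplit : (1 - ε) ^ (k + i + 1) = (1 - ε) ^ k * (1 - ε) ^ (i + 1) := by
        rw [add_assoc, pow_add]
      linarith [(hnext i).2]
  · rw [hgD]
    constructor <;> nlinarith [pow_pos hq0 k]
  · rw [hg0 k hk]
    exact ⟨le_rfl, pow_pos hq0 k⟩
termination_by D + 1 - k

/-- Lower bound in Theorem 3.1: in the finite lower-bound example, the adaptive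
value `a(0)` exceeds `2 − δ` while the optimal non-adaptive value `g(0)` is
less than `1`; in particular `a(0) > (2 − δ)·g(0)`. -/
theorem submodular_adaptivity_gap_ge_two :
    ∀ δ : ℝ, 0 < δ →
    ∃ ε : ℝ, 0 < ε ∧ ε < 1/2 ∧
      ∀ D : ℕ, ((1 - ε)^D < ε^2 ∧ ∀ D' : ℕ, D' < D → ¬((1 - ε)^D' < ε^2)) →
      ∀ a : ℕ → ℝ,
        (∀ m, D < m → a m = 0) →
        (∀ k ≤ D, a k = ∑ i ∈ Finset.range (D - k + 1),
            (1 - ε)^i * ε * ((1 - ε)^k + a (k + i + 1))) →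
      ∀ g : ℕ → ℝ,
        (∀ m, D < m → g m = 0) →
        g D = ε * (1 - ε)^D →
        (∀ k < D, g k = (Finset.range (D - k + 1)).sup'
            (Finset.nonempty_range_iff.mpr (by omega))
            (fun i => (1 - ε)^k * (1 - (1 - ε)^(i+1)) + g (k + i + 1))) →
      a 0 > 2 - δ ∧ g 0 < 1 ∧ a 0 > (2 - δ) * g 0 := by
  intro δ hδ
  set ε := min (δ / 8) (1 / 4)
  have hε0 : 0 < ε := lt_min (by linarith) (by norm_num)
  have hε4 : ε ≤ 1 / 4 := min_le_right _ _
  have hεδ : 8 * ε ≤ δ := by linarith [min_le_left (δ / 8) (1 / 4)]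
  refine ⟨ε, hε0, by linarith, fun D ⟨hqD, _⟩ a ha0 ha g hg0 hgD hg => ?_⟩
  have hD : 2 ≤ D := by
    by_contra! hD
    have : (1 - ε) ^ 1 ≤ (1 - ε) ^ D := pow_le_pow_of_le_one (by linarith) (by linarith) (by omega)
    nlinarith
  have hqD1 : (1 - ε) ^ (D + 1) ≤ (1 - ε) ^ D :=
    pow_le_pow_of_le_one (by linarith) (by linarith) D.le_succ
  have hmid : ε * D * (1 - ε) ^ (D + 1) ≤ 3 * ε :=
    le_trans (by gcongr) (mul_mul_one_sub_pow_le_three_mul hε0.le (by linarith) hD hqD)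
  have ha_lower : a 0 > 2 - 5 * ε := by
    rw [adaptive_value_eq ha0 ha D.zero_le, Nat.cast_zero, sub_zero, pow_zero, mul_one]
    nlinarith
  obtain ⟨hg0nonneg, hg0lt⟩ := nonadaptive_value_bounds hε0.le (by linarith) hg0 hgD hg 0
  rw [pow_zero] at hg0lt
  refine ⟨by linarith, hg0lt, ?_⟩
  rcases le_or_gt (2 - δ) 0 with hδ2 | hδ2
  · nlinarith
  · nlinarith
end
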